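/- Let B ∈ B(H). Then w(B)² ≥ (1/8)·[ max{ ‖B + B*‖², ‖B − B*‖² } + ‖B + B*‖·‖B − B*‖ ] ≥ (1/4)·‖|B|² + |B*|²‖. -/

import Mathlib

/-!
The Hermitian operators `B + B*` and `i (B - B*)` have quadratic forms `2 Re ⟨Bx, x⟩` and
`-2 Im ⟨Bx, x⟩`, both bounded by `2 w(B) ‖x‖²`; since the norm of a Hermitian operator is the
supremum of its Rayleigh quotient, `‖B + B*‖, ‖B - B*‖ ≤ 2 w(B)`, which gives the first inequality.
The second follows from `2 (B*B + BB*) = (B + B*)² - (B - B*)²` and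
`a² + b² ≤ max (a², b²) + ab` for `a, b ≥ 0`.
-/

open ContinuousLinearMap

variable {H : Type*} [NormedAddCommGroup H] [InnerProductSpace ℂ H] [CompleteSpace H]

/-- The numerical radius of a bounded linear operator:
`w(T) = sup { |⟨Tx, x⟩| : ‖x‖ = 1 }`. -/
noncomputable def numRadius {E : Type*} [NormedAddCommGroup E] [InnerProductSpace ℂ E]
    (T : E →L[ℂ] E) : ℝ :=
  sSup {r : ℝ | ∃ x : E, ‖x‖ = 1 ∧ r = ‖(inner ℂ (T x) x : ℂ)‖}

/-- The absolute value `|T| = (T*T)^(1/2)` of a bounded linear operator.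
Note `opAbs (adjoint T) = (T T*)^(1/2) = |T*|`. -/
noncomputable def opAbs (T : H →L[ℂ] H) : H →L[ℂ] H := CFC.sqrt (adjoint T * T)

/-- The off-diagonal operator matrix `[[0, B], [C, 0]]` acting on `H ⊕ H`
(with the Hilbert space structure `WithLp 2 (H × H)`) by `(x₁, x₂) ↦ (B x₂, C x₁)`. -/
noncomputable def offDiag (B C : H →L[ℂ] H) :
    WithLp 2 (H × H) →L[ℂ] WithLp 2 (H × H) :=
  ((WithLp.prodContinuousLinearEquiv 2 ℂ H H).symm : (H × H) →L[ℂ] WithLp 2 (H × H)).comp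
    (((B.comp (ContinuousLinearMap.snd ℂ H H)).prod
        (C.comp (ContinuousLinearMap.fst ℂ H H))).comp
      ((WithLp.prodContinuousLinearEquiv 2 ℂ H H) : WithLp 2 (H × H) →L[ℂ] H × H))

open RCLike in
theorem IsSelfAdjoint.opNorm_le_of_abs_re_inner_le {𝕜 E : Type*} [RCLike 𝕜]
    [NormedAddCommGroup E] [InnerProductSpace 𝕜 E] [CompleteSpace E] {T : E →L[𝕜] E}
    (hT : IsSelfAdjoint T) {M : ℝ} (hM : 0 ≤ M)
    (h : ∀ x, |re (inner 𝕜 (T x) x)| ≤ M * ‖x‖ ^ 2) :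
    ‖T‖ ≤ M := by
  rw [T.norm_eq_iSup_rayleighQuotient hT.isSymmetric]
  refine ciSup_le fun x => ?_
  rcases eq_or_ne x 0 with rfl | hx
  · simpa using hM
  rw [rayleighQuotient, abs_div, abs_sq, div_le_iff₀ (by positivity)]
  exact h x

open RCLike in
theorem norm_add_adjoint_le_of_norm_inner_le {𝕜 E : Type*} [RCLike 𝕜]
    [NormedAddCommGroup E] [InnerProductSpace 𝕜 E] [CompleteSpace E] (T : E →L[𝕜] E)
    {M : ℝ} (hM : 0 ≤ M) (h : ∀ x, ‖inner 𝕜 (T x) x‖ ≤ M * ‖x‖ ^ 2) :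
    ‖T + adjoint T‖ ≤ 2 * M := by
  have hself : IsSelfAdjoint (T + adjoint T) := IsSelfAdjoint.add_star_self T
  refine hself.opNorm_le_of_abs_re_inner_le (by positivity) fun x => ?_
  have hre : re (inner 𝕜 ((T + adjoint T) x) x) = 2 * re (inner 𝕜 (T x) x) := by
    rw [add_apply, inner_add_left, map_add, adjoint_inner_left, inner_re_symm]; ring
  calc |re (inner 𝕜 ((T + adjoint T) x) x)| = 2 * |re (inner 𝕜 (T x) x)| := by
        rw [hre, abs_mul, abs_two]
    _ ≤ 2 * (M * ‖x‖ ^ 2) := by gcongr; exact (abs_re_le_norm _).trans (h x)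
    _ = 2 * M * ‖x‖ ^ 2 := by ring

section NumRadius

variable {E : Type*} [NormedAddCommGroup E] [InnerProductSpace ℂ E]

theorem numRadius_bddAbove (T : E →L[ℂ] E) :
    BddAbove {r : ℝ | ∃ x : E, ‖x‖ = 1 ∧ r = ‖(inner ℂ (T x) x : ℂ)‖} := by
  refine ⟨‖T‖, ?_⟩
  rintro _ ⟨x, hx, rfl⟩
  calc ‖(inner ℂ (T x) x : ℂ)‖ ≤ ‖T x‖ * ‖x‖ := norm_inner_le_norm _ _
    _ ≤ ‖T‖ * ‖x‖ * ‖x‖ := by gcongr; exact T.le_opNorm x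
    _ = ‖T‖ := by rw [hx, mul_one, mul_one]

theorem numRadius_nonneg (T : E →L[ℂ] E) : 0 ≤ numRadius T :=
  Real.sSup_nonneg fun _ ⟨_, _, hr⟩ => hr ▸ norm_nonneg _

theorem norm_inner_self_le_numRadius_mul_sq (T : E →L[ℂ] E) (x : E) :
    ‖(inner ℂ (T x) x : ℂ)‖ ≤ numRadius T * ‖x‖ ^ 2 := by
  rcases eq_or_ne x 0 with rfl | hx
  · simp
  have hx' : 0 < ‖x‖ := norm_pos_iff.mpr hx
  have hunit : ‖((‖x‖⁻¹ : ℝ) : ℂ) • x‖ = 1 := by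
    rw [norm_smul, Complex.norm_real, norm_inv, norm_norm, inv_mul_cancel₀ hx'.ne']
  have hle := le_csSup (numRadius_bddAbove T) ⟨_, hunit, rfl⟩
  rw [map_smul, inner_smul_left, inner_smul_right, norm_mul, norm_mul, Complex.conj_ofReal,
    Complex.norm_real, norm_inv, norm_norm] at hle
  rw [← numRadius] at hle
  calc ‖(inner ℂ (T x) x : ℂ)‖ = ‖x‖ ^ 2 * (‖x‖⁻¹ * (‖x‖⁻¹ * ‖(inner ℂ (T x) x : ℂ)‖)) := by
        field_simp
    _ ≤ ‖x‖ ^ 2 * numRadius T := by gcongr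
    _ = numRadius T * ‖x‖ ^ 2 := mul_comm _ _

end NumRadius

theorem two_mul_norm_mul_add_mul_le {R : Type*} [NormedRing R] [NormedSpace ℝ R] (x y : R) :
    2 * ‖x * y + y * x‖ ≤ ‖x + y‖ ^ 2 + ‖x - y‖ ^ 2 := by
  have hsq : (2 : ℝ) • (x * y + y * x) = (x + y) ^ 2 - (x - y) ^ 2 := by
    rw [two_smul]; noncomm_ring
  calc 2 * ‖x * y + y * x‖ = ‖(x + y) ^ 2 - (x - y) ^ 2‖ := by
        rw [← hsq, norm_smul, Real.norm_two]
    _ ≤ ‖(x + y) ^ 2‖ + ‖(x - y) ^ 2‖ := norm_sub_le _ _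
    _ ≤ ‖x + y‖ ^ 2 + ‖x - y‖ ^ 2 := by
        gcongr <;> exact norm_pow_le' _ two_pos

theorem sq_add_sq_le_max_add_mul {a b : ℝ} (ha : 0 ≤ a) (hb : 0 ≤ b) :
    a ^ 2 + b ^ 2 ≤ max (a ^ 2) (b ^ 2) + a * b := by
  rcases le_total a b with hab | hab
  · rw [max_eq_right (by gcongr)]; nlinarith
  · rw [max_eq_left (by gcongr)]; nlinarith

theorem norm_add_adjoint_le_two_mul_numRadius (B : H →L[ℂ] H) :
    ‖B + adjoint B‖ ≤ 2 * numRadius B :=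
  norm_add_adjoint_le_of_norm_inner_le B (numRadius_nonneg B)
    (norm_inner_self_le_numRadius_mul_sq B)

theorem norm_sub_adjoint_le_two_mul_numRadius (B : H →L[ℂ] H) :
    ‖B - adjoint B‖ ≤ 2 * numRadius B := by
  have hrot : Complex.I • B + adjoint (Complex.I • B) = Complex.I • (B - adjoint B) := by
    rw [← star_eq_adjoint, star_smul, star_eq_adjoint, Complex.star_def, Complex.conj_I,
      smul_sub, neg_smul, sub_eq_add_neg]
  calc ‖B - adjoint B‖ = ‖Complex.I • B + adjoint (Complex.I • B)‖ := by
        rw [hrot, norm_smul, Complex.norm_I, one_mul]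
    _ ≤ 2 * numRadius B :=
        norm_add_adjoint_le_of_norm_inner_le _ (numRadius_nonneg B) fun x => by
          simpa [inner_smul_left] using norm_inner_self_le_numRadius_mul_sq B x

theorem opAbs_sq (T : H →L[ℂ] H) : opAbs T ^ 2 = adjoint T * T :=
  CFC.sq_sqrt _ (by simpa [star_eq_adjoint] using star_mul_self_nonneg T)

theorem stmt_9 (B : H →L[ℂ] H) :
    (1 / 8) * (max (‖B + adjoint B‖ ^ 2) (‖B - adjoint B‖ ^ 2) +
        ‖B + adjoint B‖ * ‖B - adjoint B‖) ≤ numRadius B ^ 2 ∧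
    (1 / 4) * ‖opAbs B ^ 2 + opAbs (adjoint B) ^ 2‖ ≤
      (1 / 8) * (max (‖B + adjoint B‖ ^ 2) (‖B - adjoint B‖ ^ 2) +
        ‖B + adjoint B‖ * ‖B - adjoint B‖) := by
  have hre := norm_add_adjoint_le_two_mul_numRadius B
  have him := norm_sub_adjoint_le_two_mul_numRadius B
  have hsq : opAbs B ^ 2 + opAbs (adjoint B) ^ 2 = B * adjoint B + adjoint B * B := by
    rw [opAbs_sq, opAbs_sq, adjoint_adjoint, add_comm]
  constructor
  · have hmax : max (‖B + adjoint B‖ ^ 2) (‖B - adjoint B‖ ^ 2) ≤ (2 * numRadius B) ^ 2 :=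
      max_le (by gcongr) (by gcongr)
    have hmul : ‖B + adjoint B‖ * ‖B - adjoint B‖ ≤ 2 * numRadius B * (2 * numRadius B) :=
      mul_le_mul hre him (norm_nonneg _) ((norm_nonneg _).trans hre)
    linarith
  · rw [hsq]
    linarith [two_mul_norm_mul_add_mul_le B (adjoint B),
      sq_add_sq_le_max_add_mul (norm_nonneg (B + adjoint B)) (norm_nonneg (B - adjoint B))]
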